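/- Let p < q be primes, let k, r ≥ 1 be integers, and let l be a prime with l ≠ p and l ≠ q. If s(p^k·q^r)·l^∞ ~ s(p^{k+1}·q^{r+1})·l^∞, then (p^{k+1} − 1)/(p − 1) = (q^{r+1} − 1)/(q − 1); in other words, any such relation with (p^{k+1}, q^{r+1}) ≠ (2^5, 5^3) yields a counterexample to Goormaghtigh's conjecture. -/

import Mathlib

noncomputable section
set_option maxHeartbeats 1000000
open scoped TensorProduct

instance (p : Nat.Primes) : Fact (p : ℕ).Prime := ⟨p.2⟩

/-- The profinite integers `Ẑ = ∏_p ℤ_p`. -/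
abbrev ZHat : Type := ∀ p : Nat.Primes, ℤ_[(p : ℕ)]

/-- The finite adele ring `𝔸_f = Ẑ ⊗ ℚ` of `ℚ`. -/
abbrev AF : Type := ZHat ⊗[ℤ] ℚ

/-- The embedding `Ẑ ⊆ 𝔸_f`. -/
def iZ : ZHat →+* AF := Algebra.TensorProduct.includeLeftRingHom

/-- The diagonal embedding `ℚ ⊆ 𝔸_f`. -/
def iQ : ℚ →+* AF :=
  (Algebra.TensorProduct.includeRight (R := ℤ) (A := ZHat) (B := ℚ)).toRingHom

/-- The relation `z ~ z'` on `𝔸_f`: there are `a, b, c, d ∈ ℚ` with `ad − bc ≠ 0`,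
`a + c·z` a unit of `𝔸_f`, and `(b + d·z)·(a + c·z)⁻¹ − z'` in the diagonal image
of `ℚ` (the partially defined `PGL₂(ℚ)`-action `z ↦ (b+dz)/(a+cz)`). -/
def adeleRel (z z' : AF) : Prop :=
  ∃ a b c d : ℚ, a * d - b * c ≠ 0 ∧
    ∃ w : AF, (iQ a + iQ c * z) * w = 1 ∧
      ∃ q : ℚ, (iQ b + iQ d * z) * w - z' = iQ q

/-- The profinite integer `s(n)` whose `p`-th component is `p^{v_p(n)}`, the largest
power of `p` dividing `n` (with component `0` when `n = 0`). -/
def sFun (n : ℕ) : ZHat :=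
  fun p => if n = 0 then 0 else ((p : ℕ) : ℤ_[(p : ℕ)]) ^ (n.factorization (p : ℕ))

/-- The profinite integer `l^∞` whose `l`-th component is `0` and whose other
components are `1`. -/
def lInf (l : Nat.Primes) : ZHat := fun p => if p = l then 0 else 1

/-! Each prime `t` gives a ring hom `𝔸_f → ℚ_t` (the `t`-component), which fixes `ℚ`; so a
relation `z ~ z'` becomes one and the same rational Möbius equation
`m' + q₀ = (b + d m)/(a + c m)` between the `t`-components `m, m'` of `z, z'`, for every `t`
at which they are rational. For `z = s(p^k q^r) l^∞` and `z' = s(p^{k+1} q^{r+1}) l^∞` the pairs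
`(m, m')` are `(0, 0)` at `l`, `(1, 1)` at any prime not dividing `l p q`, `(p^k, p·p^k)` at `p`
and `(q^r, q·q^r)` at `q`. A Möbius map through `(0, 0)` and `(1, 1)` sending `x ≠ 0` to `y x`
with `y ≠ 1` satisfies `a + c = y a + y x c` and `c ≠ 0`, i.e. `(y x - 1)/(y - 1) = -a/c`;
taking `(x, y) = (p^k, p)` and `(q^r, q)` gives the claim. -/

def adeleEval (t : Nat.Primes) : AF →+* ℚ_[(t : ℕ)] :=
  (Algebra.TensorProduct.lift
    (PadicInt.Coe.ringHom.comp (Pi.evalRingHom (fun p : Nat.Primes => ℤ_[(p : ℕ)]) t)).toIntAlgHom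
    (Rat.castHom ℚ_[(t : ℕ)]).toIntAlgHom fun _ _ => Commute.all _ _).toRingHom

lemma adeleEval_iZ (t : Nat.Primes) (x : ZHat) : adeleEval t (iZ x) = (x t : ℚ_[(t : ℕ)]) := by
  simp only [adeleEval, iZ, AlgHom.toRingHom_eq_coe, RingHom.coe_coe,
    Algebra.TensorProduct.includeLeftRingHom_apply, Algebra.TensorProduct.lift_tmul, map_one,
    mul_one]
  rfl

lemma adeleEval_iZ_sFun_mul_lInf {t l : Nat.Primes} (htl : t ≠ l) {n : ℕ} (hn : n ≠ 0) :
    adeleEval t (iZ (sFun n * lInf l)) = (((t : ℚ) ^ n.factorization t : ℚ) : ℚ_[(t : ℕ)]) := by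
  simp [adeleEval_iZ, sFun, lInf, hn, htl]

lemma adeleEval_iZ_sFun_mul_lInf_self (l : Nat.Primes) (n : ℕ) :
    adeleEval l (iZ (sFun n * lInf l)) = ((0 : ℚ) : ℚ_[(l : ℕ)]) := by
  simp [adeleEval_iZ, sFun, lInf]

theorem adeleRel.exists_mobius_eq {z z' : AF} (h : adeleRel z z') :
    ∃ a b c d q₀ : ℚ, a * d - b * c ≠ 0 ∧
      ∀ {K : Type} [Field K] [CharZero K] (φ : AF →+* K) (m m' : ℚ), φ z = m → φ z' = m' →
        b + d * m = (m' + q₀) * (a + c * m) := by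
  obtain ⟨a, b, c, d, hdet, w, hw, q₀, hq₀⟩ := h
  refine ⟨a, b, c, d, q₀, hdet, fun {K} _ _ φ m m' hm hm' => ?_⟩
  have hφ (x : ℚ) : φ (iQ x) = x := eq_ratCast (φ.comp iQ) x
  have hw' := congrArg φ hw
  have hq₀' := congrArg φ hq₀
  simp only [map_mul, map_add, map_sub, map_one, hφ, hm, hm'] at hw' hq₀'
  have : ((b + d * m : ℚ) : K) = ((m' + q₀) * (a + c * m) : ℚ) := by
    push_cast
    linear_combination (a + c * m : K) * hq₀' - (b + d * m : K) * hw'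
  exact_mod_cast this

theorem adeleRel.exists_mobius_eq_pow_factorization {n n' : ℕ} (hn : n ≠ 0) (hn' : n' ≠ 0)
    {l : Nat.Primes}
    (h : adeleRel (iZ (sFun n * lInf l)) (iZ (sFun n' * lInf l))) :
    ∃ a b c d q₀ : ℚ, a * d - b * c ≠ 0 ∧ b = q₀ * a ∧ ∀ t : Nat.Primes, t ≠ l →
      b + d * (t : ℚ) ^ n.factorization t =
        ((t : ℚ) ^ n'.factorization t + q₀) * (a + c * (t : ℚ) ^ n.factorization t) := by
  obtain ⟨a, b, c, d, q₀, hdet, heq⟩ := h.exists_mobius_eq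
  refine ⟨a, b, c, d, q₀, hdet, ?_, fun t htl => ?_⟩
  · simpa using heq (adeleEval l) 0 0 (adeleEval_iZ_sFun_mul_lInf_self l n)
      (adeleEval_iZ_sFun_mul_lInf_self l n')
  · exact heq (adeleEval t) _ _ (adeleEval_iZ_sFun_mul_lInf htl hn)
      (adeleEval_iZ_sFun_mul_lInf htl hn')

lemma sub_one_div_sub_one_eq_neg_div {K : Type*} [Field K] {a b c d q₀ x y : K}
    (hdet : a * d - b * c ≠ 0) (h₀ : b = q₀ * a) (h₁ : b + d = (1 + q₀) * (a + c))
    (hx : b + d * x = (y * x + q₀) * (a + c * x)) (hx₀ : x ≠ 0) (hy : y ≠ 1) :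
    (y * x - 1) / (y - 1) = -a / c := by
  have hy' : y - 1 ≠ 0 := sub_ne_zero.mpr hy
  have hlin : a + c = y * a + y * x * c := by
    refine mul_left_cancel₀ hx₀ ?_
    linear_combination hx - x * h₁ + (x - 1) * h₀
  have hc : c ≠ 0 := by
    rintro rfl
    have ha : a = 0 := by
      refine (mul_eq_zero.mp (?_ : (y - 1) * a = 0)).resolve_left hy'
      linear_combination -hlin
    exact hdet (by simp [ha, h₀])
  rw [div_eq_div_iff hy' hc]
  linear_combination -hlin

lemma factorization_pow_mul_pow {p q : ℕ} (hp : p.Prime) (hq : q.Prime) (k r : ℕ) :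
    (p ^ k * q ^ r).factorization = Finsupp.single p k + Finsupp.single q r := by
  rw [Nat.factorization_mul (pow_ne_zero _ hp.ne_zero) (pow_ne_zero _ hq.ne_zero),
    hp.factorization_pow, hq.factorization_pow]

theorem rel_implies_goormaghtigh_general (p q : ℕ) (hp : p.Prime) (hq : q.Prime) (hpq : p < q)
    (k r : ℕ) (l : Nat.Primes) (hlp : (l : ℕ) ≠ p)
    (hlq : (l : ℕ) ≠ q)
    (h : adeleRel (iZ (sFun (p ^ k * q ^ r) * lInf l))
      (iZ (sFun (p ^ (k + 1) * q ^ (r + 1)) * lInf l))) :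
    ((p : ℚ) ^ (k + 1) - 1) / ((p : ℚ) - 1) = ((q : ℚ) ^ (r + 1) - 1) / ((q : ℚ) - 1) := by
  obtain ⟨a, b, c, d, q₀, hdet, h₀, heq⟩ :=
    h.exists_mobius_eq_pow_factorization (by simp [hp.ne_zero, hq.ne_zero])
      (by simp [hp.ne_zero, hq.ne_zero])
  obtain ⟨t, ht, htP⟩ := Nat.exists_infinite_primes (max (max p q) l + 1)
  have h₁ := heq ⟨t, htP⟩ fun e => by have : t = l := congrArg Subtype.val e; omega
  have hP := heq ⟨p, hp⟩ fun e => hlp (congrArg Subtype.val e).symm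
  have hQ := heq ⟨q, hq⟩ fun e => hlq (congrArg Subtype.val e).symm
  simp only [factorization_pow_mul_pow hp hq, Finsupp.add_apply, Finsupp.single_apply,
    show p ≠ t by omega, show q ≠ t by omega, hpq.ne, hpq.ne', if_true, if_false, add_zero,
    zero_add, pow_zero, mul_one] at h₁ hP hQ
  have hp₁ : (p : ℚ) ≠ 1 := by exact_mod_cast hp.one_lt.ne'
  have hq₁ : (q : ℚ) ≠ 1 := by exact_mod_cast hq.one_lt.ne'
  simp only [pow_succ'] at hP hQ ⊢
  rw [sub_one_div_sub_one_eq_neg_div hdet h₀ h₁ hP (by simp [hp.ne_zero]) hp₁,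
    sub_one_div_sub_one_eq_neg_div hdet h₀ h₁ hQ (by simp [hq.ne_zero]) hq₁]

/-- (relation to Goormaghtigh's conjecture) if `p < q` are primes,
`k, r ≥ 1`, and `l` is a prime different from `p` and `q`, then
`s(p^k·q^r)·l^∞ ~ s(p^{k+1}·q^{r+1})·l^∞` forces
`(p^{k+1} − 1)/(p − 1) = (q^{r+1} − 1)/(q − 1)`. -/
theorem rel_implies_goormaghtigh (p q : ℕ) (hp : p.Prime) (hq : q.Prime) (hpq : p < q)
    (k r : ℕ) (hk : 1 ≤ k) (hr : 1 ≤ r) (l : Nat.Primes) (hlp : (l : ℕ) ≠ p)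
    (hlq : (l : ℕ) ≠ q)
    (h : adeleRel (iZ (sFun (p ^ k * q ^ r) * lInf l))
      (iZ (sFun (p ^ (k + 1) * q ^ (r + 1)) * lInf l))) :
    ((p : ℚ) ^ (k + 1) - 1) / ((p : ℚ) - 1) = ((q : ℚ) ^ (r + 1) - 1) / ((q : ℚ) - 1) :=
  rel_implies_goormaghtigh_general p q hp hq hpq k r l hlp hlq h
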